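/- arXiv:2004.06310 — 6 statements merged into one kernel-verified Lean document; each statement's English description precedes it below -/
import Mathlib

section
/- Let m ≥ 4 be an integer and Q̃_{2,m} := 2·∫₀^∞ t²/(1 + t^m) dt. For every κ > 0 and R > 0 there exists a constant C > 0, depending only on κ, R, m, such that for all ε ∈ (0, 1/2): |∫_{−R}^{R} x²/(ε + κ·|x|^m) dx − Q̃_{2,m}·κ^{−3/m}·ε^{−(1−3/m)}| ≤ C. -/
/-!
Substituting `x = (ε / κ) ^ (1 / m) * t` shows that `∫₀^∞ x ^ k / (ε + κ x ^ m) dx` equals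
`κ ^ (-(k + 1) / m) * ε ^ ((k + 1) / m - 1) * ∫₀^∞ t ^ k / (1 + t ^ m) dt` exactly. The error
term is therefore the tail `∫_R^∞ x ^ k / (ε + κ x ^ m) dx ≤ ∫_R^∞ x ^ (k - m) / κ dx`, which is
bounded independently of `ε` as soon as `k + 1 < m`. For `k = 2` the integrand over `(-R, R)` is even.
-/

open MeasureTheory intervalIntegral Set

theorem intervalIntegral.integral_neg_self_eq_two_mul_of_even {f : ℝ → ℝ} {a : ℝ}
    (heven : ∀ x, f (-x) = f x) (hf : IntervalIntegrable f volume 0 a) :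
    ∫ x in (-a)..a, f x = 2 * ∫ x in (0 : ℝ)..a, f x := by
  have hf' : IntervalIntegrable f volume (-a) 0 := by
    simpa [heven] using (IntervalIntegrable.iff_comp_neg (by finiteness)).mp hf.symm
  have hleft : ∫ x in (-a)..0, f x = ∫ x in (0 : ℝ)..a, f x := by
    simpa [heven] using (integral_comp_neg (a := 0) (b := a) f).symm
  rw [← integral_add_adjacent_intervals hf' hf, hleft, two_mul]

section PowDivAddMulPow

variable {k m : ℕ} {ε κ : ℝ}

lemma pow_div_add_mul_pow_le_rpow (hε : 0 ≤ ε) (hκ : 0 < κ) {x : ℝ} (hx : 0 < x) :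
    x ^ k / (ε + κ * x ^ m) ≤ κ⁻¹ * x ^ ((k : ℝ) - m) := by
  rw [Real.rpow_sub hx, Real.rpow_natCast, Real.rpow_natCast, inv_mul_eq_div, div_div,
    mul_comm]
  gcongr
  linarith

lemma natCast_sub_natCast_lt_neg_one (hkm : k + 1 < m) : (k : ℝ) - m < -1 := by
  have : (k : ℝ) + 1 < m := by exact_mod_cast hkm
  linarith

lemma integrableOn_Ioi_pow_div_add_mul_pow (hkm : k + 1 < m) (hε : 0 < ε) (hκ : 0 < κ) :
    IntegrableOn (fun x : ℝ ↦ x ^ k / (ε + κ * x ^ m)) (Ioi 0) := by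
  have hden : ∀ x : ℝ, 0 ≤ x → 0 < ε + κ * x ^ m := fun x hx ↦ by positivity
  rw [← Ioc_union_Ioi_eq_Ioi zero_le_one]
  refine IntegrableOn.union ?_ ?_
  · refine (ContinuousOn.integrableOn_Icc ?_).mono_set Ioc_subset_Icc_self
    exact ContinuousOn.div (by fun_prop) (by fun_prop) fun x hx ↦ (hden x hx.1).ne'
  · have hbound := integrableOn_Ioi_rpow_of_lt (natCast_sub_natCast_lt_neg_one hkm) one_pos
    refine (hbound.const_mul κ⁻¹).mono'
      (by fun_prop : Measurable fun x : ℝ ↦ x ^ k / (ε + κ * x ^ m)).aestronglyMeasurable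
      ((ae_restrict_iff' measurableSet_Ioi).2 (.of_forall fun x hx ↦ ?_))
    have hx0 : (0 : ℝ) < x := zero_lt_one.trans hx
    rw [Real.norm_of_nonneg (div_nonneg (by positivity) (hden x hx0.le).le)]
    exact pow_div_add_mul_pow_le_rpow hε.le hκ hx0

lemma integral_Ioi_pow_div_add_mul_pow_le (hkm : k + 1 < m) (hε : 0 ≤ ε) (hκ : 0 < κ)
    {R : ℝ} (hR : 0 < R) :
    ∫ x in Ioi R, x ^ k / (ε + κ * x ^ m) ≤
      R ^ ((k : ℝ) + 1 - m) / (((m : ℝ) - (k + 1)) * κ) := by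
  have hexp := natCast_sub_natCast_lt_neg_one hkm
  calc ∫ x in Ioi R, x ^ k / (ε + κ * x ^ m)
      ≤ ∫ x in Ioi R, κ⁻¹ * x ^ ((k : ℝ) - m) := by
        refine integral_mono_of_nonneg ?_ ((integrableOn_Ioi_rpow_of_lt hexp hR).const_mul _) ?_
        all_goals refine (ae_restrict_iff' measurableSet_Ioi).2 (.of_forall fun x hx ↦ ?_)
        · have hx0 : 0 < x := hR.trans hx
          positivity
        · exact pow_div_add_mul_pow_le_rpow hε hκ (hR.trans hx)
    _ = R ^ ((k : ℝ) + 1 - m) / (((m : ℝ) - (k + 1)) * κ) := by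
        rw [MeasureTheory.integral_const_mul, integral_Ioi_rpow_of_lt hexp hR]
        have hne : (m : ℝ) - (k + 1) ≠ 0 := by linarith
        rw [show (k : ℝ) - m + 1 = -((m : ℝ) - (k + 1)) by ring,
          show (k : ℝ) + 1 - m = -((m : ℝ) - (k + 1)) by ring]
        field_simp

lemma integral_Ioi_pow_div_add_mul_pow (hm : m ≠ 0) (hε : 0 < ε) (hκ : 0 < κ) :
    ∫ x in Ioi 0, x ^ k / (ε + κ * x ^ m) =
      κ ^ (-(((k : ℝ) + 1) / m)) * ε ^ (-(1 - ((k : ℝ) + 1) / m)) *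
        ∫ t in Ioi 0, t ^ k / (1 + t ^ m) := by
  have hεκ : 0 < ε / κ := div_pos hε hκ
  set c := (ε / κ) ^ ((m : ℝ)⁻¹)
  have hc : 0 < c := Real.rpow_pos_of_pos hεκ _
  have hcm : c ^ m = ε / κ := Real.rpow_inv_natCast_pow hεκ.le hm
  have hcoef :
      c ^ (k + 1) / ε = κ ^ (-(((k : ℝ) + 1) / m)) * ε ^ (-(1 - ((k : ℝ) + 1) / m)) := by
    rw [← Real.rpow_natCast, ← Real.rpow_mul hεκ.le, Real.div_rpow hε.le hκ.le,
      Real.rpow_neg hκ.le, show -(1 - ((k : ℝ) + 1) / m) = ((k : ℝ) + 1) / m - 1 by ring,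
      Real.rpow_sub hε, Real.rpow_one]
    push_cast
    ring_nf
  have hsubst : ∀ t : ℝ,
      (c * t) ^ k / (ε + κ * (c * t) ^ m) = c ^ k / ε * (t ^ k / (1 + t ^ m)) := by
    intro t
    rw [mul_pow, mul_pow, ← mul_assoc, hcm, mul_div_cancel₀ _ hκ.ne', ← mul_one_add,
      mul_div_mul_comm]
  have := integral_comp_mul_left_Ioi (fun x : ℝ ↦ x ^ k / (ε + κ * x ^ m)) 0 hc
  simp only [hsubst, mul_zero, smul_eq_mul, MeasureTheory.integral_const_mul] at this
  rw [← hcoef, (inv_mul_eq_iff_eq_mul₀ hc.ne').mp this.symm]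
  ring

lemma abs_intervalIntegral_pow_div_add_mul_pow_sub_le (hkm : k + 1 < m) (hε : 0 < ε)
    (hκ : 0 < κ) {R : ℝ} (hR : 0 < R) :
    |(∫ x in (0 : ℝ)..R, x ^ k / (ε + κ * x ^ m)) -
        κ ^ (-(((k : ℝ) + 1) / m)) * ε ^ (-(1 - ((k : ℝ) + 1) / m)) *
          ∫ t in Ioi 0, t ^ k / (1 + t ^ m)| ≤
      R ^ ((k : ℝ) + 1 - m) / (((m : ℝ) - (k + 1)) * κ) := by
  have htail_nonneg : 0 ≤ ∫ x in Ioi R, x ^ k / (ε + κ * x ^ m) :=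
    setIntegral_nonneg measurableSet_Ioi fun x hx ↦ by
      have : 0 < x := hR.trans hx
      positivity
  have hsplit :
      (∫ x in Ioi 0, x ^ k / (ε + κ * x ^ m)) - ∫ x in Ioi R, x ^ k / (ε + κ * x ^ m) =
        ∫ x in (0 : ℝ)..R, x ^ k / (ε + κ * x ^ m) :=
    integral_Ioi_sub_Ioi (integrableOn_Ioi_pow_div_add_mul_pow hkm hε hκ) hR.le
  rw [← integral_Ioi_pow_div_add_mul_pow (by omega) hε hκ, ← hsplit, sub_sub_cancel_left,
    abs_neg, abs_of_nonneg htail_nonneg]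
  exact integral_Ioi_pow_div_add_mul_pow_le hkm hε.le hκ hR

end PowDivAddMulPow

/-- Let `m ≥ 4` and `Q̃_{2,m} := 2∫₀^∞ t²/(1 + t^m) dt`. For every `κ > 0`, `R > 0` there is
`C > 0` (depending only on `κ, R, m`) such that for all `ε ∈ (0, 1/2)`:
`|∫_{−R}^{R} x²/(ε + κ·|x|^m) dx − Q̃_{2,m}·κ^{−3/m}·ε^{−(1−3/m)}| ≤ C`. -/
theorem stmt4 (m : ℕ) (hm : 4 ≤ m) (κ R : ℝ) (hκ : 0 < κ) (hR : 0 < R) :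
    ∃ C > 0, ∀ ε : ℝ, 0 < ε → ε < 1/2 →
      |(∫ x in (-R)..R, x ^ 2 / (ε + κ * |x| ^ m)) -
          (2 * ∫ t in Set.Ioi (0 : ℝ), t ^ 2 / (1 + t ^ m)) *
            κ ^ (-(3 / (m : ℝ))) * ε ^ (-(1 - 3 / (m : ℝ)))| ≤ C := by
  have hm3 : (0 : ℝ) < m - 3 := by
    have : (4 : ℝ) ≤ m := by exact_mod_cast hm
    linarith
  refine ⟨2 * (R ^ (3 - m : ℝ) / ((m - 3) * κ)), by positivity, fun ε hε _ ↦ ?_⟩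
  have hcont : Continuous fun x : ℝ ↦ x ^ 2 / (ε + κ * |x| ^ m) :=
    Continuous.div (by fun_prop) (by fun_prop) fun x ↦ by positivity
  have hsymm : ∫ x in (-R)..R, x ^ 2 / (ε + κ * |x| ^ m) =
      2 * ∫ x in (0 : ℝ)..R, x ^ 2 / (ε + κ * x ^ m) := by
    rw [integral_neg_self_eq_two_mul_of_even (fun x ↦ by rw [neg_sq, abs_neg])
      (hcont.intervalIntegrable 0 R)]
    congr 1
    refine integral_congr fun x hx ↦ ?_
    rw [uIcc_of_le hR.le] at hx
    simp only [abs_of_nonneg hx.1]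
  have hhalf :=
    abs_intervalIntegral_pow_div_add_mul_pow_sub_le (k := 2) (m := m) (by omega) hε hκ hR
  rw [show ((2 : ℕ) : ℝ) + 1 = 3 by norm_num] at hhalf
  calc _ = 2 * |(∫ x in (0 : ℝ)..R, x ^ 2 / (ε + κ * x ^ m)) -
          κ ^ (-(3 / (m : ℝ))) * ε ^ (-(1 - 3 / (m : ℝ))) *
            ∫ t in Ioi 0, t ^ 2 / (1 + t ^ m)| := by
        rw [hsymm, ← abs_two, ← abs_mul]
        congr 1
        ring
    _ ≤ _ := by gcongr
end

section
/- Let m ≥ 3 be an integer and Q_{3,m} := 2·∫₀^∞ t/(1 + t^m) dt. For every κ > 0 and R > 0 there exists a constant C > 0, depending only on κ, R, m, such that for all ε ∈ (0, 1/2): |∫_{B_R} 1/(ε + κ·|x′|^m) dx′ − π·Q_{3,m}·κ^{−2/m}·ε^{−(1−2/m)}| ≤ C, where B_R ⊂ ℝ² is the open disc of radius R centered at the origin and dx′ is two-dimensional Lebesgue measure. -/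
/-!
In polar coordinates the disc integral is `2π ∫₀^R r / (ε + κ r^m) dr`, and the substitution
`r = c t` with `κ c^m = ε` turns it into `2π (c²/ε) ∫₀^{R/c} t / (1 + t^m) dt`, where
`c²/ε = κ^{-2/m} ε^{-(1-2/m)}`. So the error is `2π (c²/ε)` times the tail
`∫_{R/c}^∞ t / (1 + t^m) dt ≤ (R/c)^{2-m} / (m-2)`, and because `c^m = ε/κ` this product is
`2π R^{2-m} / (κ (m-2))` for every `ε > 0`.
-/

open MeasureTheory Set Real

lemma div_one_add_pow_le_rpow (m : ℕ) {t : ℝ} (ht : 0 < t) :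
    t / (1 + t ^ m) ≤ t ^ ((1 : ℝ) - m) := by
  rw [rpow_sub ht, rpow_one, rpow_natCast]
  gcongr
  linarith

lemma continuousOn_div_one_add_pow (m : ℕ) :
    ContinuousOn (fun t : ℝ => t / (1 + t ^ m)) (Ici 0) :=
  continuousOn_id.div (by fun_prop) fun t ht =>
    (add_pos_of_pos_of_nonneg one_pos (pow_nonneg ht m)).ne'

lemma integrableOn_Ioi_div_one_add_pow {m : ℕ} (hm : 2 < m) :
    IntegrableOn (fun t : ℝ => t / (1 + t ^ m)) (Ioi 0) := by
  have h01 : IntegrableOn (fun t : ℝ => t / (1 + t ^ m)) (Ioc 0 1) :=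
    ((continuousOn_div_one_add_pow m).mono Icc_subset_Ici_self).integrableOn_Icc.mono_set
      Ioc_subset_Icc_self
  have h1 : IntegrableOn (fun t : ℝ => t / (1 + t ^ m)) (Ioi 1) := by
    have hm' : (1 : ℝ) - m < -1 := by
      have : (2 : ℝ) < m := by exact_mod_cast hm
      linarith
    refine (integrableOn_Ioi_rpow_of_lt hm' one_pos).mono' ?_ ?_
    · exact ((continuousOn_div_one_add_pow m).mono fun t (ht : 1 < t) =>
        (zero_lt_one.trans ht).le).aestronglyMeasurable measurableSet_Ioi
    · filter_upwards [ae_restrict_mem measurableSet_Ioi] with t ht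
      have ht0 : 0 < t := zero_lt_one.trans ht
      rw [Real.norm_of_nonneg (by positivity)]
      exact div_one_add_pow_le_rpow m ht0
  simpa only [Ioc_union_Ioi_eq_Ioi zero_le_one] using h01.union h1

lemma setIntegral_Ioi_div_one_add_pow_le {m : ℕ} (hm : 2 < m) {T : ℝ} (hT : 0 < T) :
    ∫ t in Ioi T, t / (1 + t ^ m) ≤ T ^ ((2 : ℝ) - m) / (m - 2) := by
  have hm' : (1 : ℝ) - m < -1 := by
    have : (2 : ℝ) < m := by exact_mod_cast hm
    linarith
  calc ∫ t in Ioi T, t / (1 + t ^ m) ≤ ∫ t in Ioi T, t ^ ((1 : ℝ) - m) :=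
        setIntegral_mono_on
          ((integrableOn_Ioi_div_one_add_pow hm).mono_set (Ioi_subset_Ioi hT.le))
          (integrableOn_Ioi_rpow_of_lt hm' hT) measurableSet_Ioi
          fun t ht => div_one_add_pow_le_rpow m (hT.trans ht)
    _ = T ^ ((2 : ℝ) - m) / (m - 2) := by
        rw [integral_Ioi_rpow_of_lt hm' hT, show (1 : ℝ) - m + 1 = 2 - m by ring, neg_div,
          ← div_neg, neg_sub]

lemma integral_ball_fun_norm_eq_two_pi_mul (g : ℝ → ℝ) {R : ℝ} (hR : 0 ≤ R) :
    ∫ x in Metric.ball (0 : EuclideanSpace ℝ (Fin 2)) R, g ‖x‖ =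
      2 * π * ∫ r in 0..R, r * g r := by
  have hvol : volume.real (Metric.ball (0 : EuclideanSpace ℝ (Fin 2)) 1) = π := by
    rw [measureReal_def, EuclideanSpace.volume_ball]
    norm_num [Fintype.card_fin]
    exact Real.sq_sqrt Real.pi_nonneg
  have hball : (Metric.ball 0 R).indicator (fun x => g ‖x‖) =
      fun x : EuclideanSpace ℝ (Fin 2) => (Iio R).indicator g ‖x‖ := by
    ext x
    by_cases h : ‖x‖ < R <;> simp [h]
  have hpolar : ∀ r : ℝ, r ^ (2 - 1) • (Iio R).indicator g r =
      (Iio R).indicator (fun r => r * g r) r := by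
    intro r
    by_cases h : r < R <;> simp [h]
  rw [← integral_indicator measurableSet_ball, hball, integral_fun_norm_addHaar,
    finrank_euclideanSpace_fin, hvol]
  simp only [hpolar]
  rw [integral_indicator measurableSet_Iio, Measure.restrict_restrict measurableSet_Iio,
    Iio_inter_Ioi, intervalIntegral.integral_of_le hR, integral_Ioc_eq_integral_Ioo, nsmul_eq_mul,
    smul_eq_mul]
  push_cast
  ring

lemma intervalIntegral_mul_one_div_add_mul_pow_eq {m : ℕ} {ε κ c : ℝ} (hc : 0 < c)
    (hκc : κ * c ^ m = ε) (R : ℝ) :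
    ∫ r in 0..R, r * (1 / (ε + κ * r ^ m)) = c ^ 2 / ε * ∫ t in 0..R / c, t / (1 + t ^ m) := by
  have hpt : ∀ t : ℝ, c * t * (1 / (ε + κ * (c * t) ^ m)) = c / ε * (t / (1 + t ^ m)) := by
    intro t
    rw [mul_pow, ← mul_assoc, hκc, show ε + ε * t ^ m = ε * (1 + t ^ m) by ring, mul_one_div,
      div_mul_div_comm]
  have h := intervalIntegral.integral_comp_mul_left (a := 0) (b := R / c)
    (fun r => r * (1 / (ε + κ * r ^ m))) hc.ne'
  simp only [hpt, mul_zero, mul_div_cancel₀ _ hc.ne', intervalIntegral.integral_const_mul,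
    smul_eq_mul] at h
  rw [eq_inv_mul_iff_mul_eq₀ hc.ne'] at h
  rw [← h]
  ring

lemma exists_pos_mul_pow_eq_and_sq_div_eq_rpow {m : ℕ} (hm : m ≠ 0) {ε κ : ℝ} (hε : 0 < ε)
    (hκ : 0 < κ) :
    ∃ c > 0, κ * c ^ m = ε ∧ c ^ 2 / ε = κ ^ (-(2 / (m : ℝ))) * ε ^ (-(1 - 2 / (m : ℝ))) := by
  refine ⟨(ε / κ) ^ ((m : ℝ)⁻¹), by positivity, ?_, ?_⟩
  · rw [rpow_inv_natCast_pow (by positivity) hm]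
    exact mul_div_cancel₀ ε hκ.ne'
  · rw [← rpow_natCast, ← rpow_mul (by positivity), div_rpow hε.le hκ.le, rpow_neg hκ.le,
      neg_sub, rpow_sub hε, rpow_one]
    field_simp
    rw [Nat.cast_ofNat]
    ring

lemma sq_div_mul_rpow_div_eq {m : ℕ} {ε κ c R : ℝ} (hc : 0 < c) (hR : 0 ≤ R)
    (hκc : κ * c ^ m = ε) (hκ : 0 < κ) :
    c ^ 2 / ε * (R / c) ^ ((2 : ℝ) - m) = R ^ ((2 : ℝ) - m) / κ := by
  rw [div_rpow hR hc.le, rpow_sub hc, rpow_two, rpow_natCast, ← hκc]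
  field_simp

/-- Let `m ≥ 3` and `Q_{3,m} := 2∫₀^∞ t/(1 + t^m) dt`. For every `κ > 0`, `R > 0` there is
`C > 0` (depending only on `κ, R, m`) such that for all `ε ∈ (0, 1/2)`:
`|∫_{B_R ⊂ ℝ²} 1/(ε + κ·|x′|^m) dx′ − π·Q_{3,m}·κ^{−2/m}·ε^{−(1−2/m)}| ≤ C`. -/
theorem stmt5 (m : ℕ) (hm : 3 ≤ m) (κ R : ℝ) (hκ : 0 < κ) (hR : 0 < R) :
    ∃ C > 0, ∀ ε : ℝ, 0 < ε → ε < 1/2 →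
      |(∫ x in Metric.ball (0 : EuclideanSpace ℝ (Fin 2)) R, 1 / (ε + κ * ‖x‖ ^ m)) -
          Real.pi * (2 * ∫ t in Set.Ioi (0 : ℝ), t / (1 + t ^ m)) *
            κ ^ (-(2 / (m : ℝ))) * ε ^ (-(1 - 2 / (m : ℝ)))| ≤ C := by
  have hm2 : (2 : ℝ) < m := by exact_mod_cast hm
  refine ⟨2 * π * R ^ ((2 : ℝ) - m) / (κ * (m - 2)), by have := sub_pos.2 hm2; positivity,
    fun ε hε _ => ?_⟩
  obtain ⟨c, hc, hκc, hscale⟩ :=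
    exists_pos_mul_pow_eq_and_sq_div_eq_rpow (m := m) (by omega) hε hκ
  set tail := ∫ t in Ioi (R / c), t / (1 + t ^ m)
  have herror : (∫ x in Metric.ball (0 : EuclideanSpace ℝ (Fin 2)) R, 1 / (ε + κ * ‖x‖ ^ m)) -
      π * (2 * ∫ t in Ioi (0 : ℝ), t / (1 + t ^ m)) *
        κ ^ (-(2 / (m : ℝ))) * ε ^ (-(1 - 2 / (m : ℝ))) = -(2 * π * (c ^ 2 / ε) * tail) := by
    rw [integral_ball_fun_norm_eq_two_pi_mul (fun r => 1 / (ε + κ * r ^ m)) hR.le,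
      intervalIntegral_mul_one_div_add_mul_pow_eq hc hκc,
      ← intervalIntegral.integral_Ioi_sub_Ioi (integrableOn_Ioi_div_one_add_pow hm)
        (by positivity), mul_assoc _ (κ ^ _), ← hscale]
    ring
  have htail : 0 ≤ tail := by
    refine setIntegral_nonneg measurableSet_Ioi fun t (ht : R / c < t) => ?_
    have : 0 < t := (div_pos hR hc).trans ht
    positivity
  rw [herror, abs_neg, abs_of_nonneg (by positivity)]
  calc 2 * π * (c ^ 2 / ε) * tail
      ≤ 2 * π * (c ^ 2 / ε) * ((R / c) ^ ((2 : ℝ) - m) / (m - 2)) := by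
        gcongr
        exact setIntegral_Ioi_div_one_add_pow_le hm (div_pos hR hc)
    _ = 2 * π * R ^ ((2 : ℝ) - m) / (κ * (m - 2)) := by
        rw [mul_div_assoc', mul_assoc _ (c ^ 2 / ε), sq_div_mul_rpow_div_eq hc hR.le hκc hκ,
          mul_div_assoc', div_div]
end

section
/- Let λ, μ ∈ ℝ with λ + 2μ ≠ 0, let ε > 0, and let h₁, h₂ : ℝ² → ℝ be differentiable on an open set U ⊆ ℝ² with δ(x′) := ε + h₁(x′) − h₂(x′) > 0 for all x′ ∈ U. Define ū(x′, x₃) := (x₃ + ε/2 − h₂(x′))/δ(x′), f(t) := (1/2)(t − 1/2)² − 1/8, and for α ∈ {1, 2} set ũ_α(x′, x₃) := ((λ+μ)/(λ+2μ))·f(ū(x′, x₃))·∂_{x_α}δ(x′). Then for every x′ ∈ U, every x₃ ∈ ℝ, and each α ∈ {1, 2}: (i) ∂_{x₃}ū = 1/δ(x′); (ii) ∂_{x₃}∂_{x_α}ū = −∂_{x_α}δ(x′)/δ(x′)²; (iii) ∂_{x₃}∂_{x₃}ũ_α = ((λ+μ)/(λ+2μ))·∂_{x_α}δ(x′)/δ(x′)²;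 and consequently (λ+μ)·∂_{x₃}∂_{x_α}ū + (λ+2μ)·∂_{x₃}∂_{x₃}ũ_α = 0. -/
/-!
The function `ū` is affine in `x₃` with slope `1/δ`, so `∂₃∂_α ū = ∂_α(1/δ) = -∂_αδ/δ²`.
The profile `f` has `f'' = 1` and `∂_αδ` does not depend on `x₃`, hence
`∂₃∂₃ũ_α = (λ+μ)/(λ+2μ) · ∂_αδ · (1/δ)²`; multiplying by `λ+2μ` gives exactly the opposite of
`(λ+μ)·∂₃∂_α ū`.
-/

section

variable {𝕜 E : Type*} [NontriviallyNormedField 𝕜] [NormedAddCommGroup E] [NormedSpace 𝕜 E]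

theorem hasDerivAt_add_sub_div_const (c b d t : 𝕜) :
    HasDerivAt (fun t => (t + c - b) / d) (1 / d) t :=
  (((hasDerivAt_id t).add_const c).sub_const b).div_const d

theorem fderiv_sub_div_apply {f g : E → 𝕜} {x : E} (hf : DifferentiableAt 𝕜 f x)
    (hg : DifferentiableAt 𝕜 g x) (hx : g x ≠ 0) (s : 𝕜) (v : E) :
    fderiv 𝕜 (fun y => (s - f y) / g y) x v =
      -fderiv 𝕜 f x v / g x - (s - f x) * fderiv 𝕜 g x v / g x ^ 2 := by
  have h : HasFDerivAt (fun y => (s - f y) * (g y)⁻¹) _ x :=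
    ((hasFDerivAt_const s x).fun_sub hf.hasFDerivAt).fun_mul
      ((hasFDerivAt_inv hx).comp x hg.hasFDerivAt)
  simp only [div_eq_mul_inv, h.fderiv, zero_sub, smul_neg, add_apply, smul_apply, neg_apply,
    ContinuousLinearMap.comp_apply, ContinuousLinearMap.toSpanSingleton_apply, smul_eq_mul,
    mul_neg, neg_mul]
  ring

theorem hasDerivAt_fderiv_add_sub_div_apply {f g : E → 𝕜} {x : E} (hf : DifferentiableAt 𝕜 f x)
    (hg : DifferentiableAt 𝕜 g x) (hx : g x ≠ 0) (c : 𝕜) (v : E) (t : 𝕜) :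
    HasDerivAt (fun t => fderiv 𝕜 (fun y => (t + c - f y) / g y) x v)
      (-fderiv 𝕜 g x v / g x ^ 2) t := by
  simp_rw [fderiv_sub_div_apply hf hg hx]
  exact ((((((hasDerivAt_id t).add_const c).sub_const (f x)).mul_const _).div_const _).const_sub
    _).congr_deriv (by ring)

theorem hasDerivAt_deriv_const_mul_half_sq_comp [CharZero 𝕜] {p : 𝕜 → 𝕜} {k : 𝕜}
    (hp : ∀ t, HasDerivAt p k t) (c a b m t : 𝕜) :
    HasDerivAt (fun t => deriv (fun s => c * (1 / 2 * (p s - a) ^ 2 - b) * m) t)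
      (c * k ^ 2 * m) t := by
  have hderiv : ∀ t, HasDerivAt (fun s => c * (1 / 2 * (p s - a) ^ 2 - b) * m)
      (c * ((p t - a) * k) * m) t := fun t =>
    (((((((hp t).sub_const a).pow 2).const_mul (1 / 2)).sub_const b).const_mul c).mul_const
      m).congr_deriv (by ring)
  simp_rw [fun t => (hderiv t).deriv]
  exact ((((hp t).sub_const a).mul_const k).const_mul c).mul_const m |>.congr_deriv (by ring)

end

theorem stmt10_general (lam mu ε : ℝ) (hlm : lam + 2 * mu ≠ 0)
    (U : Set (EuclideanSpace ℝ (Fin 2)))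
    (h₁ h₂ : EuclideanSpace ℝ (Fin 2) → ℝ)
    (hdiff : ∀ x ∈ U, DifferentiableAt ℝ h₁ x ∧ DifferentiableAt ℝ h₂ x)
    (hδpos : ∀ x ∈ U, 0 < ε + h₁ x - h₂ x) :
    ∀ x' ∈ U, ∀ x₃ : ℝ, ∀ α : Fin 2,
      (let δ : EuclideanSpace ℝ (Fin 2) → ℝ := fun y => ε + h₁ y - h₂ y
       let δα : ℝ := fderiv ℝ δ x' (EuclideanSpace.single α 1)
       let ub : EuclideanSpace ℝ (Fin 2) → ℝ → ℝ := fun y t => (t + ε / 2 - h₂ y) / δ y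
       let f : ℝ → ℝ := fun t => (1 / 2) * (t - 1 / 2) ^ 2 - 1 / 8
       let ut : EuclideanSpace ℝ (Fin 2) → ℝ → ℝ :=
         fun y t => ((lam + mu) / (lam + 2 * mu)) * f (ub y t) *
           fderiv ℝ δ y (EuclideanSpace.single α 1)
       deriv (fun t => ub x' t) x₃ = 1 / δ x' ∧
       deriv (fun t => fderiv ℝ (fun y => ub y t) x' (EuclideanSpace.single α 1)) x₃ =
         -δα / (δ x') ^ 2 ∧
       deriv (fun t => deriv (fun t' => ut x' t') t) x₃ =
         ((lam + mu) / (lam + 2 * mu)) * δα / (δ x') ^ 2 ∧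
       (lam + mu) *
           deriv (fun t => fderiv ℝ (fun y => ub y t) x' (EuclideanSpace.single α 1)) x₃ +
         (lam + 2 * mu) * deriv (fun t => deriv (fun t' => ut x' t') t) x₃ = 0) := by
  intro x' hx' x₃ α δ δα ub f ut
  obtain ⟨hh₁, hh₂⟩ := hdiff x' hx'
  have hδ : DifferentiableAt ℝ δ x' := ((differentiableAt_const ε).add hh₁).sub hh₂
  have hδ0 : δ x' ≠ 0 := (hδpos x' hx').ne'
  have d₃ub : deriv (fun t => ub x' t) x₃ = 1 / δ x' :=
    (hasDerivAt_add_sub_div_const _ _ _ _).deriv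
  have d₃dαub : deriv (fun t => fderiv ℝ (fun y => ub y t) x' (EuclideanSpace.single α 1)) x₃ =
      -δα / δ x' ^ 2 :=
    (hasDerivAt_fderiv_add_sub_div_apply hh₂ hδ hδ0 _ _ _).deriv
  have d₃d₃ut : deriv (fun t => deriv (fun t' => ut x' t') t) x₃ =
      (lam + mu) / (lam + 2 * mu) * δα / δ x' ^ 2 := by
    rw [(hasDerivAt_deriv_const_mul_half_sq_comp
      (hasDerivAt_add_sub_div_const (ε / 2) (h₂ x') (δ x')) _ _ _ _ _).deriv]
    simp only [δα]
    field_simp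
  have hK : (lam + 2 * mu) * ((lam + mu) / (lam + 2 * mu)) = lam + mu := mul_div_cancel₀ _ hlm
  refine ⟨d₃ub, d₃dαub, d₃d₃ut, ?_⟩
  rw [d₃dαub, d₃d₃ut]
  linear_combination δα / δ x' ^ 2 * hK

/-- Three-dimensional cancellation identity. Let `λ + 2μ ≠ 0`, `ε > 0`, and let `h₁, h₂ : ℝ² → ℝ`
be differentiable on an open set `U` with `δ(x′) := ε + h₁(x′) − h₂(x′) > 0` on `U`.
With `ū(x′,x₃) := (x₃ + ε/2 − h₂(x′))/δ(x′)`, `f(t) := (1/2)(t − 1/2)² − 1/8`, and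
`ũ_α(x′,x₃) := ((λ+μ)/(λ+2μ))·f(ū(x′,x₃))·∂_{x_α}δ(x′)` for `α ∈ {1,2}`, one has for every
`x′ ∈ U`, `x₃ ∈ ℝ`, `α`: (i) `∂₃ū = 1/δ(x′)`; (ii) `∂₃∂_αū = −∂_αδ(x′)/δ(x′)²`;
(iii) `∂₃∂₃ũ_α = ((λ+μ)/(λ+2μ))·∂_αδ(x′)/δ(x′)²`; consequently
`(λ+μ)·∂₃∂_αū + (λ+2μ)·∂₃∂₃ũ_α = 0`. -/
theorem stmt10 (lam mu ε : ℝ) (hlm : lam + 2 * mu ≠ 0) (hε : 0 < ε)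
    (U : Set (EuclideanSpace ℝ (Fin 2))) (hU : IsOpen U)
    (h₁ h₂ : EuclideanSpace ℝ (Fin 2) → ℝ)
    (hdiff : ∀ x ∈ U, DifferentiableAt ℝ h₁ x ∧ DifferentiableAt ℝ h₂ x)
    (hδpos : ∀ x ∈ U, 0 < ε + h₁ x - h₂ x) :
    ∀ x' ∈ U, ∀ x₃ : ℝ, ∀ α : Fin 2,
      (let δ : EuclideanSpace ℝ (Fin 2) → ℝ := fun y => ε + h₁ y - h₂ y
       let δα : ℝ := fderiv ℝ δ x' (EuclideanSpace.single α 1)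
       let ub : EuclideanSpace ℝ (Fin 2) → ℝ → ℝ := fun y t => (t + ε / 2 - h₂ y) / δ y
       let f : ℝ → ℝ := fun t => (1 / 2) * (t - 1 / 2) ^ 2 - 1 / 8
       let ut : EuclideanSpace ℝ (Fin 2) → ℝ → ℝ :=
         fun y t => ((lam + mu) / (lam + 2 * mu)) * f (ub y t) *
           fderiv ℝ δ y (EuclideanSpace.single α 1)
       deriv (fun t => ub x' t) x₃ = 1 / δ x' ∧
       deriv (fun t => fderiv ℝ (fun y => ub y t) x' (EuclideanSpace.single α 1)) x₃ =
         -δα / (δ x') ^ 2 ∧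
       deriv (fun t => deriv (fun t' => ut x' t') t) x₃ =
         ((lam + mu) / (lam + 2 * mu)) * δα / (δ x') ^ 2 ∧
       (lam + mu) *
           deriv (fun t => fderiv ℝ (fun y => ub y t) x' (EuclideanSpace.single α 1)) x₃ +
         (lam + 2 * mu) * deriv (fun t => deriv (fun t' => ut x' t') t) x₃ = 0) :=
  stmt10_general lam mu ε hlm U h₁ h₂ hdiff hδpos
end

section
/- Let n, k ≥ 1 be integers, let B ⊆ ℝⁿ be a measurable set, let h, H : ℝⁿ → ℝ be continuous with h(x′) ≤ H(x′) ≤ h(x′) + δ₀ for all x′ ∈ B, where δ₀ > 0, and set Ω := {(x′, t) ∈ ℝⁿ × ℝ : x′ ∈ B, h(x′) < t < H(x′)}. Let w : ℝⁿ × ℝ → ℝ^k be continuous, such that for each x′ ∈ B the function t ↦ w(x′, t) is continuously differentiable on [h(x′), H(x′)] and w(x′, h(x′)) = 0, and assume ∂_t w is square integrable on Ω. Then ∫_Ω |w|² ≤ δ₀² · ∫_Ω |∂_t w|², where the integrals are with respect to Lebesgue measure on ℝ^{n+1}. -/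
/-!
Along each vertical fibre, `w (x', t)` is the integral of `∂ₜw` from the lower graph, so by
Cauchy–Schwarz `|w (x', t)|² ≤ (H - h) ∫ |∂ₜw|²` on that fibre, and integrating in `t` gives
`∫ |w|² ≤ (H - h)² ∫ |∂ₜw|²` there. Tonelli over `x' ∈ B` yields the inequality for lower
Lebesgue integrals, which needs no integrability at all; the integrability of `|∂ₜw|²` enters only
when passing back to Bochner integrals.
-/

open MeasureTheory Set
open scoped ENNReal

theorem sq_lintegral_le_measure_univ_mul_lintegral_sq {α : Type*} [MeasurableSpace α]
    {μ : Measure α} {f : α → ℝ≥0∞} (hf : AEMeasurable f μ) :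
    (∫⁻ a, f a ∂μ) ^ 2 ≤ μ univ * ∫⁻ a, f a ^ 2 ∂μ := by
  have holder := ENNReal.lintegral_mul_le_Lp_mul_Lq μ Real.HolderConjugate.two_two hf
    (aemeasurable_const (b := 1))
  simp only [Pi.mul_apply, mul_one, lintegral_const, one_pow, one_mul, ENNReal.rpow_two]
    at holder
  calc (∫⁻ a, f a ∂μ) ^ 2
      ≤ ((∫⁻ a, f a ^ 2 ∂μ) ^ (1 / 2 : ℝ) * μ univ ^ (1 / 2 : ℝ)) ^ 2 := by gcongr
    _ = μ univ * ∫⁻ a, f a ^ 2 ∂μ := by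
      rw [mul_pow, ← ENNReal.rpow_natCast, ← ENNReal.rpow_natCast (μ univ ^ _),
        ← ENNReal.rpow_mul, ← ENNReal.rpow_mul]
      norm_num [mul_comm]

section OneDimensional

variable {E : Type*} [NormedAddCommGroup E] [NormedSpace ℝ E] [CompleteSpace E]

theorem enorm_sub_le_lintegral_enorm_deriv {u : ℝ → E} {a b : ℝ} (hab : a ≤ b)
    (hu : ContinuousOn u (Icc a b)) (hd : ∀ t ∈ Ioo a b, DifferentiableAt ℝ u t) :
    ‖u b - u a‖ₑ ≤ ∫⁻ t in Ioo a b, ‖deriv u t‖ₑ := by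
  rw [Measure.restrict_congr_set Ioo_ae_eq_Ioc]
  by_cases hfin : ∫⁻ t in Ioc a b, ‖deriv u t‖ₑ < ∞
  · have hint : IntervalIntegrable (deriv u) volume a b :=
      (intervalIntegrable_iff_integrableOn_Ioc_of_le hab).2
        ⟨aestronglyMeasurable_deriv u _, hfin⟩
    rw [← intervalIntegral.integral_eq_sub_of_hasDerivAt_of_le hab hu
      (fun t ht => (hd t ht).hasDerivAt) hint, intervalIntegral.integral_of_le hab]
    exact enorm_integral_le_lintegral_enorm _
  · rw [not_lt_top_iff.1 hfin]
    exact le_top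

theorem lintegral_enorm_sq_le_of_eq_zero_left {u : ℝ → E} {a b : ℝ}
    (hu : ContinuousOn u (Icc a b)) (hd : ∀ t ∈ Ioo a b, DifferentiableAt ℝ u t)
    (hua : u a = 0) :
    ∫⁻ t in Ioo a b, ‖u t‖ₑ ^ 2
      ≤ ENNReal.ofReal (b - a) ^ 2 * ∫⁻ t in Ioo a b, ‖deriv u t‖ₑ ^ 2 := by
  set I := ∫⁻ t in Ioo a b, ‖deriv u t‖ₑ ^ 2
  have pointwise : ∀ t ∈ Ioo a b, ‖u t‖ₑ ^ 2 ≤ ENNReal.ofReal (b - a) * I := by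
    intro t ht
    calc ‖u t‖ₑ ^ 2 = ‖u t - u a‖ₑ ^ 2 := by rw [hua, sub_zero]
      _ ≤ (∫⁻ s in Ioo a t, ‖deriv u s‖ₑ) ^ 2 := by
          gcongr
          exact enorm_sub_le_lintegral_enorm_deriv ht.1.le
            (hu.mono (Icc_subset_Icc_right ht.2.le)) fun s hs => hd s ⟨hs.1, hs.2.trans ht.2⟩
      _ ≤ (∫⁻ s in Ioo a b, ‖deriv u s‖ₑ) ^ 2 := by
          gcongr ?_ ^ 2
          exact lintegral_mono_set (Ioo_subset_Ioo_right ht.2.le)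
      _ ≤ ENNReal.ofReal (b - a) * I := by
          simpa [Real.volume_Ioo] using sq_lintegral_le_measure_univ_mul_lintegral_sq
            (aestronglyMeasurable_deriv u (volume.restrict (Ioo a b))).enorm
  calc ∫⁻ t in Ioo a b, ‖u t‖ₑ ^ 2 ≤ ∫⁻ _ in Ioo a b, ENNReal.ofReal (b - a) * I :=
        setLIntegral_mono' measurableSet_Ioo pointwise
    _ = ENNReal.ofReal (b - a) ^ 2 * I := by
        rw [setLIntegral_const, Real.volume_Ioo]; ring

end OneDimensional

theorem lintegral_regionBetween {α : Type*} [MeasurableSpace α] {μ : Measure α} [SFinite μ]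
    {f g : α → ℝ} {s : Set α} (hf : Measurable f) (hg : Measurable g) (hs : MeasurableSet s)
    {F : α × ℝ → ℝ≥0∞} (hF : Measurable F) :
    ∫⁻ p in regionBetween f g s, F p ∂μ.prod volume
      = ∫⁻ x in s, (∫⁻ t in Ioo (f x) (g x), F (x, t)) ∂μ := by
  have fiber : ∀ x, ∫⁻ t, (regionBetween f g s).indicator F (x, t)
      = s.indicator (fun x => ∫⁻ t in Ioo (f x) (g x), F (x, t)) x := by
    intro x
    by_cases hx : x ∈ s
    · rw [indicator_of_mem hx, ← lintegral_indicator measurableSet_Ioo]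
      congr with t
      classical
      simp only [regionBetween, indicator_apply, mem_ofPred_eq, hx, true_and]
    · simp [regionBetween, hx]
  rw [← lintegral_indicator (measurableSet_regionBetween hf hg hs),
    lintegral_prod _ (hF.indicator (measurableSet_regionBetween hf hg hs)).aemeasurable,
    ← lintegral_indicator hs]
  exact lintegral_congr fiber

theorem integral_norm_sq_le_of_lintegral_enorm_sq_le {α E F : Type*} [MeasurableSpace α]
    {μ : Measure α} [NormedAddCommGroup E] [NormedAddCommGroup F] {f : α → E} {g : α → F}
    {c : ℝ} (hc : 0 ≤ c) (hg : Integrable (fun a => ‖g a‖ ^ 2) μ)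
    (hfg : ∫⁻ a, ‖f a‖ₑ ^ 2 ∂μ ≤ ENNReal.ofReal c * ∫⁻ a, ‖g a‖ₑ ^ 2 ∂μ) :
    ∫ a, ‖f a‖ ^ 2 ∂μ ≤ c * ∫ a, ‖g a‖ ^ 2 ∂μ := by
  by_cases hf : Integrable (fun a => ‖f a‖ ^ 2) μ
  · rw [← ENNReal.ofReal_le_ofReal_iff (by positivity), ENNReal.ofReal_mul hc,
      ofReal_integral_eq_lintegral_ofReal hf (ae_of_all _ fun a => by positivity),
      ofReal_integral_eq_lintegral_ofReal hg (ae_of_all _ fun a => by positivity)]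
    simpa only [ENNReal.ofReal_pow (norm_nonneg _), ofReal_norm] using hfg
  · rw [integral_undef hf]
    positivity

theorem stmt11_general (n k : ℕ)
    (B : Set (EuclideanSpace ℝ (Fin n))) (hB : MeasurableSet B)
    (h H : EuclideanSpace ℝ (Fin n) → ℝ) (hh : Continuous h) (hH : Continuous H)
    (δ₀ : ℝ)
    (hhH : ∀ x ∈ B, h x ≤ H x ∧ H x ≤ h x + δ₀)
    (w : EuclideanSpace ℝ (Fin n) × ℝ → EuclideanSpace ℝ (Fin k))
    (hw : Continuous w)
    (hwC1 : ∀ x ∈ B, ContDiffOn ℝ 1 (fun t => w (x, t)) (Set.Icc (h x) (H x)))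
    (hw0 : ∀ x ∈ B, w (x, h x) = 0)
    (Ω : Set (EuclideanSpace ℝ (Fin n) × ℝ))
    (hΩ : Ω = {p | p.1 ∈ B ∧ h p.1 < p.2 ∧ p.2 < H p.1})
    (hint : IntegrableOn (fun p => ‖deriv (fun t => w (p.1, t)) p.2‖ ^ 2) Ω) :
    ∫ p in Ω, ‖w p‖ ^ 2 ≤ δ₀ ^ 2 * ∫ p in Ω, ‖deriv (fun t => w (p.1, t)) p.2‖ ^ 2 := by
  have fiber : ∀ x ∈ B, ∫⁻ t in Ioo (h x) (H x), ‖w (x, t)‖ₑ ^ 2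
      ≤ ENNReal.ofReal (δ₀ ^ 2) * ∫⁻ t in Ioo (h x) (H x), ‖deriv (fun t => w (x, t)) t‖ₑ ^ 2 := by
    intro x hx
    have hC1 := hwC1 x hx
    refine (lintegral_enorm_sq_le_of_eq_zero_left hC1.continuousOn
      (fun t ht => (hC1.differentiableOn one_ne_zero t (Ioo_subset_Icc_self ht)).differentiableAt
        (Icc_mem_nhds ht.1 ht.2)) (hw0 x hx)).trans ?_
    rw [← ENNReal.ofReal_pow (sub_nonneg.2 (hhH x hx).1)]
    gcongr <;> linarith [hhH x hx]
  have hΩ' : Ω = regionBetween h H B := by rw [hΩ]; rfl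
  refine integral_norm_sq_le_of_lintegral_enorm_sq_le (sq_nonneg δ₀) hint ?_
  rw [hΩ', Measure.volume_eq_prod,
    lintegral_regionBetween hh.measurable hH.measurable hB (hw.measurable.enorm.pow_const 2),
    lintegral_regionBetween hh.measurable hH.measurable hB
      ((measurable_deriv_with_param (f := fun x t => w (x, t)) hw).enorm.pow_const 2),
    ← lintegral_const_mul' _ _ ENNReal.ofReal_ne_top]
  exact setLIntegral_mono' hB fiber

/-- Thin-domain Poincaré inequality: for the narrow region
`Ω := {(x′,t) : x′ ∈ B, h(x′) < t < H(x′)}` with `h ≤ H ≤ h + δ₀` on `B`, and a continuous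
vector field `w` vanishing on the lower graph, `C¹` in `t`, with `∂_t w` square integrable
on `Ω`, one has `∫_Ω |w|² ≤ δ₀² ∫_Ω |∂_t w|²`. -/
theorem stmt11 (n k : ℕ) (hn : 1 ≤ n) (hk : 1 ≤ k)
    (B : Set (EuclideanSpace ℝ (Fin n))) (hB : MeasurableSet B)
    (h H : EuclideanSpace ℝ (Fin n) → ℝ) (hh : Continuous h) (hH : Continuous H)
    (δ₀ : ℝ) (hδ₀ : 0 < δ₀)
    (hhH : ∀ x ∈ B, h x ≤ H x ∧ H x ≤ h x + δ₀)
    (w : EuclideanSpace ℝ (Fin n) × ℝ → EuclideanSpace ℝ (Fin k))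
    (hw : Continuous w)
    (hwC1 : ∀ x ∈ B, ContDiffOn ℝ 1 (fun t => w (x, t)) (Set.Icc (h x) (H x)))
    (hw0 : ∀ x ∈ B, w (x, h x) = 0)
    (Ω : Set (EuclideanSpace ℝ (Fin n) × ℝ))
    (hΩ : Ω = {p | p.1 ∈ B ∧ h p.1 < p.2 ∧ p.2 < H p.1})
    (hint : IntegrableOn (fun p => ‖deriv (fun t => w (p.1, t)) p.2‖ ^ 2) Ω) :
    ∫ p in Ω, ‖w p‖ ^ 2 ≤ δ₀ ^ 2 * ∫ p in Ω, ‖deriv (fun t => w (p.1, t)) p.2‖ ^ 2 :=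
  stmt11_general n k B hB h H hh hH δ₀ hhH w hw hwC1 hw0 Ω hΩ hint
end

section
/- Let n ≥ 1 be an integer, ε ∈ (0, 1), κ > 0, C₀ > 0, R > 0, and let h₁, h₂ : ℝⁿ → ℝ be differentiable on the open ball B_R ⊂ ℝⁿ with h₁(0) = h₂(0) = 0, |∇h_i(x′)| ≤ C₀|x′| for i = 1, 2, and h₁(x′) − h₂(x′) ≥ κ|x′|² for all x′ ∈ B_R. Set δ(x′) := ε + h₁(x′) − h₂(x′) and ū(x′, x_{n+1}) := (x_{n+1} + ε/2 − h₂(x′))/δ(x′). Then there exists a constant C > 0, depending only on κ and C₀, such that for all x′ ∈ B_R and all x_{n+1} ∈ [−ε/2 + h₂(x′), ε/2 + h₁(x′)]: |∇_{x′}ū(x′, x_{n+1})| ≤ C·|x′|/(ε + |x′|²), and ∂_{x_{n+1}}ū(x′, x_{n+1}) = 1/δ(x′). -/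
/-!
Write `ū = a / δ` with `a = x_{n+1} + ε/2 − h₂`. On the narrow region `0 ≤ a ≤ δ`, so the quotient
rule gives `|∇ū| ≤ (|∇a| + |∇δ|)/δ ≤ 3C₀|x′|/δ`, and the 2-convexity `δ ≥ ε + κ|x′|²` together with
`ε + |x′|² ≤ (1 + 1/κ)(ε + κ|x′|²)` turns this into the claimed bound.
-/

theorem HasFDerivAt.norm_fderiv_div_le {E : Type*} [NormedAddCommGroup E] [NormedSpace ℝ E]
    {a b : E → ℝ} {a' b' : E →L[ℝ] ℝ} {x : E} (ha : HasFDerivAt a a' x)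
    (hb : HasFDerivAt b b' x) (ha₀ : 0 ≤ a x) (hab : a x ≤ b x) (hb₀ : 0 < b x) :
    ‖fderiv ℝ (fun y => a y / b y) x‖ ≤ (‖a'‖ + ‖b'‖) / b x := by
  have hquot : HasFDerivAt (fun y => a y / b y) (a x • (-(b x ^ 2)⁻¹ • b') + (b x)⁻¹ • a') x := by
    rw [show (fun y => a y / b y) = a * (fun y => (b y)⁻¹) from
      funext fun y => div_eq_mul_inv (a y) (b y)]
    exact ha.mul ((hasDerivAt_inv hb₀.ne').comp_hasFDerivAt x hb)
  rw [hquot.fderiv]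
  calc _ ≤ a x * ((b x ^ 2)⁻¹ * ‖b'‖) + (b x)⁻¹ * ‖a'‖ := by
        refine (norm_add_le _ _).trans ?_
        simp only [norm_smul, norm_neg, Real.norm_of_nonneg ha₀, norm_inv, norm_pow,
          Real.norm_of_nonneg hb₀.le, le_refl]
    _ ≤ b x * ((b x ^ 2)⁻¹ * ‖b'‖) + (b x)⁻¹ * ‖a'‖ := by gcongr
    _ = (‖a'‖ + ‖b'‖) / b x := by field_simp; ring

theorem div_add_mul_sq_le_div_add_sq {κ ε r c : ℝ} (hκ : 0 < κ) (hε : 0 < ε) (hc : 0 ≤ c) :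
    c / (ε + κ * r ^ 2) ≤ (1 + κ⁻¹) * c / (ε + r ^ 2) := by
  rw [div_le_div_iff₀ (by positivity) (by positivity)]
  have hden : ε + r ^ 2 ≤ (1 + κ⁻¹) * (ε + κ * r ^ 2) := by
    rw [add_mul, one_mul, mul_add, inv_mul_cancel_left₀ hκ.ne']
    nlinarith [sq_nonneg r, inv_pos.2 hκ]
  nlinarith [mul_le_mul_of_nonneg_left hden hc]

/-- Gradient estimate for the auxiliary function `ū = (x_{n+1} + ε/2 − h₂(x′))/δ(x′)`,
`δ(x′) = ε + h₁(x′) − h₂(x′)`, on the narrow region: there is `C > 0` depending only on `κ`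
and `C₀` such that `|∇_{x′}ū| ≤ C|x′|/(ε + |x′|²)` and `∂_{x_{n+1}}ū = 1/δ(x′)`. -/
theorem stmt13 (κ C₀ : ℝ) (hκ : 0 < κ) (hC₀ : 0 < C₀) :
    ∃ C > 0, ∀ (n : ℕ), 1 ≤ n → ∀ (ε R : ℝ), 0 < ε → ε < 1 → 0 < R →
      ∀ (h₁ h₂ : EuclideanSpace ℝ (Fin n) → ℝ),
        (∀ x ∈ Metric.ball (0 : EuclideanSpace ℝ (Fin n)) R,
          DifferentiableAt ℝ h₁ x ∧ DifferentiableAt ℝ h₂ x) →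
        h₁ 0 = 0 → h₂ 0 = 0 →
        (∀ x ∈ Metric.ball (0 : EuclideanSpace ℝ (Fin n)) R,
          ‖fderiv ℝ h₁ x‖ ≤ C₀ * ‖x‖ ∧ ‖fderiv ℝ h₂ x‖ ≤ C₀ * ‖x‖) →
        (∀ x ∈ Metric.ball (0 : EuclideanSpace ℝ (Fin n)) R,
          κ * ‖x‖ ^ 2 ≤ h₁ x - h₂ x) →
        ∀ x ∈ Metric.ball (0 : EuclideanSpace ℝ (Fin n)) R,
          ∀ t ∈ Set.Icc (-ε / 2 + h₂ x) (ε / 2 + h₁ x),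
            ‖fderiv ℝ (fun y => (t + ε / 2 - h₂ y) / (ε + h₁ y - h₂ y)) x‖ ≤
                C * ‖x‖ / (ε + ‖x‖ ^ 2) ∧
              deriv (fun s => (s + ε / 2 - h₂ x) / (ε + h₁ x - h₂ x)) t =
                1 / (ε + h₁ x - h₂ x) := by
  refine ⟨3 * C₀ * (1 + κ⁻¹), by positivity, ?_⟩
  intro n _ ε R hε _ _ h₁ h₂ hdiff _ _ hgrad hconv x hx t ht
  obtain ⟨hd₁, hd₂⟩ := hdiff x hx
  obtain ⟨hg₁, hg₂⟩ := hgrad x hx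
  have hδ : ε + κ * ‖x‖ ^ 2 ≤ ε + h₁ x - h₂ x := by linarith [hconv x hx]
  refine ⟨?_, (((hasDerivAt_id' t).add_const _).sub_const _).div_const _ |>.deriv⟩
  have hnum := hd₂.hasFDerivAt.const_sub (t + ε / 2)
  have hden := (hd₁.hasFDerivAt.const_add ε).fun_sub hd₂.hasFDerivAt
  calc _ ≤ (‖-fderiv ℝ h₂ x‖ + ‖fderiv ℝ h₁ x - fderiv ℝ h₂ x‖) / (ε + h₁ x - h₂ x) :=
        hnum.norm_fderiv_div_le hden (by linarith [ht.1]) (by linarith [ht.2])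
          ((by positivity : (0 : ℝ) < ε + κ * ‖x‖ ^ 2).trans_le hδ)
    _ ≤ 3 * C₀ * ‖x‖ / (ε + κ * ‖x‖ ^ 2) := by
        rw [norm_neg]
        gcongr
        linarith [norm_sub_le (fderiv ℝ h₁ x) (fderiv ℝ h₂ x)]
    _ ≤ (1 + κ⁻¹) * (3 * C₀ * ‖x‖) / (ε + ‖x‖ ^ 2) :=
        div_add_mul_sq_le_div_add_sq hκ hε (by positivity)
    _ = 3 * C₀ * (1 + κ⁻¹) * ‖x‖ / (ε + ‖x‖ ^ 2) := by ring
end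

section
/- Let μ > 0, λ ∈ ℝ with λ + 2μ > 0, κ > 0, R ∈ (0, 1], and let m ≥ 2 be an integer. For ε ∈ (0, 1/2) consider the model narrow region Ω_R := {(x₁, x₂) ∈ ℝ² : |x₁| < R, −ε/2 − (κ/2)|x₁|^m < x₂ < ε/2 + (κ/2)|x₁|^m}, with δ(x₁) := ε + κ|x₁|^m, ū(x₁, x₂) := (x₂ + ε/2 + (κ/2)|x₁|^m)/δ(x₁), and f(t) := (1/2)(t − 1/2)² − 1/8. Define the vector field u := (ū, ((λ+μ)/(λ+2μ))·f(ū)·δ′)ᵀ : ℝ² → ℝ², and the Lamé operator (ℒ_{λ,μ}u)^j := μ(∂₁∂₁ + ∂₂∂₂)u^j + (λ+μ)·∂_j(∂₁u¹ + ∂₂u²) for j = 1, 2. Then there exists a constant C > 0, depending only on λ, μ, κ, m, R and not on ε, such that for every (x₁, x₂) ∈ Ω_R with x₁ ≠ 0: |ℒ_{λ,μ}u(x₁, x₂)| ≤ C·(|x₁|^{m−2}/δ(x₁) + |x₁|^{m−3}). -/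
/-!
With `τ = x₂ / δ(x₁)` one has `ū = τ + 1/2` and `f(ū) = τ²/2 - 1/8`, so the chain rule expresses
both components of `ℒu` through `δ, δ', δ'', δ'''` at `x₁`. The coefficient `(λ+μ)/(λ+2μ)` of the
corrector is exactly the one for which the terms in `δ'/δ²`, of the too large size
`|x₁|^(m-1)/δ²`, cancel in the second component. Away from `x₁ = 0` the model gap has
`δ⁽ᵏ⁾(x₁) = κ m (m-1) ⋯ (m-k+1) |x₁|^m / x₁^k`, so in the normalized variables `τ ∈ [-1/2, 1/2]`
and `q = κ|x₁|^m/δ ∈ [0, 1]` the first component is `κ|x₁|^(m-2)/δ` and the second is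
`κ|x₁|^(m-3)` times a polynomial in `τ, q, m` bounded by `m²`, resp. `2m³`.
-/

open Filter Topology

/-- Partial derivative in the first variable of a function of two real variables. -/
noncomputable def pd1 (g : ℝ → ℝ → ℝ) (x y : ℝ) : ℝ := deriv (fun s => g s y) x

/-- Partial derivative in the second variable of a function of two real variables. -/
noncomputable def pd2 (g : ℝ → ℝ → ℝ) (x y : ℝ) : ℝ := deriv (fun s => g x s) y

noncomputable def ubar (δ : ℝ → ℝ) (x y : ℝ) : ℝ := (y + δ x / 2) / δ x

noncomputable def corrector (a : ℝ) (δ : ℝ → ℝ) (x y : ℝ) : ℝ :=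
  a * (1 / 2 * (ubar δ x y - 1 / 2) ^ 2 - 1 / 8) * deriv δ x

noncomputable def divergence (u v : ℝ → ℝ → ℝ) (x y : ℝ) : ℝ := pd1 u x y + pd2 v x y

noncomputable def lameFst (lam mu : ℝ) (u v : ℝ → ℝ → ℝ) (x y : ℝ) : ℝ :=
  mu * (pd1 (pd1 u) x y + pd2 (pd2 u) x y) + (lam + mu) * pd1 (divergence u v) x y

noncomputable def lameSnd (lam mu : ℝ) (u v : ℝ → ℝ → ℝ) (x y : ℝ) : ℝ :=
  mu * (pd1 (pd1 v) x y + pd2 (pd2 v) x y) + (lam + mu) * pd2 (divergence u v) x y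

section LameOfCorrector

variable {δ δ₁ δ₂ : ℝ → ℝ} {a d s t x y : ℝ}

theorem ubar_sub_half (h : δ s ≠ 0) : ubar δ s t - 1 / 2 = t / δ s := by
  unfold ubar; field_simp; ring

theorem hasDerivAt_ubar_snd : HasDerivAt (ubar δ s) (1 / δ s) t :=
  (((hasDerivAt_id' t).add_const (δ s / 2)).div_const (δ s)).congr_deriv (by simp)

theorem hasDerivAt_ubar_fst (hd : HasDerivAt δ d s) (h : δ s ≠ 0) :
    HasDerivAt (fun s => ubar δ s t) (-t * d / δ s ^ 2) s :=
  (((hasDerivAt_const s t).fun_add (hd.div_const 2)).div hd h).congr_deriv (by field_simp; ring)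

theorem hasDerivAt_corrector_snd (h : δ s ≠ 0) :
    HasDerivAt (corrector a δ s) (a * t * deriv δ s / δ s ^ 2) t := by
  have hu := ((hasDerivAt_ubar_snd (δ := δ) (s := s) (t := t)).sub_const (1 / 2)).fun_pow 2
  refine (((hu.const_mul (1 / 2)).sub_const (1 / 8)).const_mul a |>.mul_const (deriv δ s))
    |>.congr_deriv ?_
  simp only [ubar_sub_half h, Nat.cast_ofNat, Nat.add_one_sub_one, pow_one]
  field_simp

theorem hasDerivAt_corrector_fst (hd : ∀ᶠ s' in 𝓝 s, HasDerivAt δ (δ₁ s') s')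
    (hd₁ : HasDerivAt δ₁ d s) (h : δ s ≠ 0) :
    HasDerivAt (fun s => corrector a δ s t)
      (a * ((1 / 2 * (t / δ s) ^ 2 - 1 / 8) * d - t ^ 2 * δ₁ s ^ 2 / δ s ^ 3)) s := by
  have hderiv : (fun s => corrector a δ s t) =ᶠ[𝓝 s]
      fun s => a * (1 / 2 * (ubar δ s t - 1 / 2) ^ 2 - 1 / 8) * δ₁ s := by
    filter_upwards [hd] with s' hs' using by rw [corrector, hs'.deriv]
  have hu := ((hasDerivAt_ubar_fst hd.self_of_nhds h (t := t)).sub_const (1 / 2)).fun_pow 2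
  refine ((((hu.const_mul (1 / 2)).sub_const (1 / 8)).const_mul a).mul hd₁
    |>.congr_of_eventuallyEq hderiv).congr_deriv ?_
  simp only [ubar_sub_half h, Nat.cast_ofNat, Nat.add_one_sub_one, pow_one]
  field_simp
  ring

theorem hasDerivAt_div_sq (hd : HasDerivAt δ (δ₁ x) x) (hd₁ : HasDerivAt δ₁ (δ₂ x) x)
    (h : δ x ≠ 0) :
    HasDerivAt (fun s => δ₁ s / δ s ^ 2)
      (δ₂ x / δ x ^ 2 - 2 * δ₁ x ^ 2 / δ x ^ 3) x :=
  (hd₁.div (hd.fun_pow 2) (pow_ne_zero 2 h)).congr_deriv (by field_simp; ring)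

theorem pd1_ubar_eventually (hδ : ∀ᶠ s in 𝓝 x, δ s ≠ 0 ∧ HasDerivAt δ (δ₁ s) s) :
    ∀ᶠ s in 𝓝 x, ∀ t, pd1 (ubar δ) s t = -t * δ₁ s / δ s ^ 2 := by
  filter_upwards [hδ] with s ⟨h, hd⟩ t using (hasDerivAt_ubar_fst hd h).deriv

theorem pd2_corrector (h : δ s ≠ 0) :
    pd2 (corrector a δ) s t = a * t * deriv δ s / δ s ^ 2 :=
  (hasDerivAt_corrector_snd h).deriv

theorem divergence_eventually (hδ : ∀ᶠ s in 𝓝 x, δ s ≠ 0 ∧ HasDerivAt δ (δ₁ s) s) :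
    ∀ᶠ s in 𝓝 x, ∀ t,
      divergence (ubar δ) (corrector a δ) s t = (a - 1) * t * (δ₁ s / δ s ^ 2) := by
  filter_upwards [hδ, pd1_ubar_eventually hδ] with s ⟨h, hd⟩ hpd1 t
  rw [divergence, hpd1, pd2_corrector h, hd.deriv]
  ring

theorem pd1_pd1_ubar (hδ : ∀ᶠ s in 𝓝 x, δ s ≠ 0 ∧ HasDerivAt δ (δ₁ s) s)
    (hd₁ : HasDerivAt δ₁ (δ₂ x) x) :
    pd1 (pd1 (ubar δ)) x y = -y * (δ₂ x / δ x ^ 2 - 2 * δ₁ x ^ 2 / δ x ^ 3) := by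
  have hfun : (fun s => pd1 (ubar δ) s y) =ᶠ[𝓝 x] fun s => -y * (δ₁ s / δ s ^ 2) := by
    filter_upwards [pd1_ubar_eventually hδ] with s hs using by rw [hs]; ring
  exact (((hasDerivAt_div_sq hδ.self_of_nhds.2 hd₁ hδ.self_of_nhds.1).const_mul (-y)
    ).congr_of_eventuallyEq hfun).deriv

theorem pd2_pd2_ubar : pd2 (pd2 (ubar δ)) x y = 0 := by
  simp only [pd2, hasDerivAt_ubar_snd.deriv, deriv_const]

theorem pd1_divergence (hδ : ∀ᶠ s in 𝓝 x, δ s ≠ 0 ∧ HasDerivAt δ (δ₁ s) s)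
    (hd₁ : HasDerivAt δ₁ (δ₂ x) x) :
    pd1 (divergence (ubar δ) (corrector a δ)) x y =
      (a - 1) * y * (δ₂ x / δ x ^ 2 - 2 * δ₁ x ^ 2 / δ x ^ 3) := by
  have hfun : (fun s => divergence (ubar δ) (corrector a δ) s y) =ᶠ[𝓝 x]
      fun s => (a - 1) * y * (δ₁ s / δ s ^ 2) := by
    filter_upwards [divergence_eventually hδ] with s hs using hs y
  exact (((hasDerivAt_div_sq hδ.self_of_nhds.2 hd₁ hδ.self_of_nhds.1).const_mul _
    ).congr_of_eventuallyEq hfun).deriv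

theorem pd2_divergence (hδ : ∀ᶠ s in 𝓝 x, δ s ≠ 0 ∧ HasDerivAt δ (δ₁ s) s) :
    pd2 (divergence (ubar δ) (corrector a δ)) x y = (a - 1) * (δ₁ x / δ x ^ 2) := by
  have hfun : (fun t => divergence (ubar δ) (corrector a δ) x t) =
      fun t => (a - 1) * (δ₁ x / δ x ^ 2) * t := by
    ext t; rw [(divergence_eventually hδ).self_of_nhds t]; ring
  rw [pd2, hfun]
  simp

theorem pd2_pd2_corrector (h : δ x ≠ 0) :
    pd2 (pd2 (corrector a δ)) x y = a * deriv δ x / δ x ^ 2 := by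
  have hfun : (fun t => pd2 (corrector a δ) x t) = fun t => a * deriv δ x / δ x ^ 2 * t := by
    ext t; rw [pd2_corrector h]; ring
  rw [pd2, hfun]
  simp

theorem pd1_pd1_corrector {δ₃ : ℝ} (hδ : ∀ᶠ s in 𝓝 x, δ s ≠ 0 ∧ HasDerivAt δ (δ₁ s) s)
    (hδ₁ : ∀ᶠ s in 𝓝 x, HasDerivAt δ₁ (δ₂ s) s) (hd₂ : HasDerivAt δ₂ δ₃ x) :
    pd1 (pd1 (corrector a δ)) x y = a * ((1 / 2 * (y / δ x) ^ 2 - 1 / 8) * δ₃ -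
      3 * y ^ 2 * δ₁ x * δ₂ x / δ x ^ 3 + 3 * y ^ 2 * δ₁ x ^ 3 / δ x ^ 4) := by
  have hfun : (fun s => pd1 (corrector a δ) s y) =ᶠ[𝓝 x] fun s =>
      a * ((1 / 2 * (y / δ s) ^ 2 - 1 / 8) * δ₂ s - y ^ 2 * (δ₁ s ^ 2 / δ s ^ 3)) := by
    filter_upwards [hδ.eventually_nhds, hδ₁] with s hs hs₁
    rw [pd1, (hasDerivAt_corrector_fst (hs.mono fun _ h => h.2) hs₁ hs.self_of_nhds.1).deriv]
    ring
  obtain ⟨h, hd⟩ := hδ.self_of_nhds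
  have hq := ((hasDerivAt_const x y).fun_div hd h).fun_pow 2
  have hr := (hδ₁.self_of_nhds.fun_pow 2).fun_div (hd.fun_pow 3) (pow_ne_zero 3 h)
  refine ((((((hq.const_mul (1 / 2)).sub_const (1 / 8)).fun_mul hd₂).fun_sub
    (hr.const_mul (y ^ 2))).const_mul a).congr_of_eventuallyEq hfun).deriv.trans ?_
  simp only [Nat.reduceSub, pow_one, Nat.cast_ofNat]
  field_simp
  ring

theorem lameFst_ubar_corrector (lam mu : ℝ) (hδ : ∀ᶠ s in 𝓝 x, δ s ≠ 0 ∧ HasDerivAt δ (δ₁ s) s)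
    (hd₁ : HasDerivAt δ₁ (δ₂ x) x) :
    lameFst lam mu (ubar δ) (corrector a δ) x y =
      -(mu + (lam + mu) * (1 - a)) * y * (δ₂ x / δ x ^ 2 - 2 * δ₁ x ^ 2 / δ x ^ 3) := by
  rw [lameFst, pd1_pd1_ubar hδ hd₁, pd2_pd2_ubar, pd1_divergence hδ hd₁]
  ring

theorem lameSnd_ubar_corrector (lam mu : ℝ) {δ₃ : ℝ}
    (hδ : ∀ᶠ s in 𝓝 x, δ s ≠ 0 ∧ HasDerivAt δ (δ₁ s) s)
    (hδ₁ : ∀ᶠ s in 𝓝 x, HasDerivAt δ₁ (δ₂ s) s) (hd₂ : HasDerivAt δ₂ δ₃ x) :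
    lameSnd lam mu (ubar δ) (corrector a δ) x y =
      mu * a * ((1 / 2 * (y / δ x) ^ 2 - 1 / 8) * δ₃ - 3 * y ^ 2 * δ₁ x * δ₂ x / δ x ^ 3 +
        3 * y ^ 2 * δ₁ x ^ 3 / δ x ^ 4) +
      (mu * a + (lam + mu) * (a - 1)) * (δ₁ x / δ x ^ 2) := by
  obtain ⟨h, hd⟩ := hδ.self_of_nhds
  rw [lameSnd, pd1_pd1_corrector hδ hδ₁ hd₂, pd2_pd2_corrector h, pd2_divergence hδ, hd.deriv]
  ring

end LameOfCorrector

theorem hasDerivAt_abs_pow_div_pow {s : ℝ} (hs : s ≠ 0) (m k : ℕ) :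
    HasDerivAt (fun s => |s| ^ m / s ^ k) (((m : ℝ) - k) * |s| ^ m / s ^ (k + 1)) s := by
  have habs : HasDerivAt (fun s => |s| ^ m) (m * |s| ^ m / s) s := by
    refine ((hasDerivAt_abs hs).pow m).congr_deriv ?_
    rcases m with _ | n
    · simp
    · rw [pow_succ, ← sign_mul_self s]
      field_simp
      simp
  refine (habs.div (hasDerivAt_pow k s) (pow_ne_zero k hs)).congr_deriv ?_
  rcases k with _ | k
  · simp
  · field_simp
    push_cast
    ring

noncomputable def modelGap (ε κ : ℝ) (m : ℕ) (s : ℝ) : ℝ := ε + κ * |s| ^ m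

section ModelGap

variable {ε κ : ℝ} {m : ℕ} {s : ℝ}

theorem hasDerivAt_modelGap (hs : s ≠ 0) :
    HasDerivAt (modelGap ε κ m) (κ * m * |s| ^ m / s) s := by
  have h := ((hasDerivAt_abs_pow_div_pow hs m 0).const_mul κ).const_add ε
  simp only [pow_zero, div_one, Nat.cast_zero, sub_zero, zero_add, pow_one] at h
  exact h.congr_deriv (by ring)

theorem hasDerivAt_modelGap₁ (hs : s ≠ 0) :
    HasDerivAt (fun s => κ * m * |s| ^ m / s) (κ * m * (m - 1) * |s| ^ m / s ^ 2) s := by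
  have h := (hasDerivAt_abs_pow_div_pow hs m 1).const_mul (κ * m)
  simp only [pow_one, Nat.cast_one] at h
  exact (h.congr_of_eventuallyEq (.of_forall fun x => by ring)).congr_deriv (by ring)

theorem hasDerivAt_modelGap₂ (hs : s ≠ 0) :
    HasDerivAt (fun s => κ * m * (m - 1) * |s| ^ m / s ^ 2)
      (κ * m * (m - 1) * (m - 2) * |s| ^ m / s ^ 3) s := by
  have h := (hasDerivAt_abs_pow_div_pow hs m 2).const_mul (κ * m * (m - 1))
  exact (h.congr_of_eventuallyEq (.of_forall fun x => by ring)).congr_deriv (by push_cast; ring)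

end ModelGap

theorem natCast_mul_sub_one_nonneg (m : ℕ) : 0 ≤ (m : ℝ) * (m - 1) := by
  rcases m with _ | m <;> push_cast <;> nlinarith

theorem natCast_mul_sub_one_mul_sub_two_nonneg (m : ℕ) : 0 ≤ (m : ℝ) * (m - 1) * (m - 2) := by
  rcases m with _ | _ | m
  · simp
  · simp
  · push_cast
    ring_nf
    positivity

section Normalized

variable {τ q : ℝ}

theorem abs_normalized_lameFst_le (m : ℕ) (hτ : |τ| ≤ 1 / 2) (hq₀ : 0 ≤ q) (hq₁ : q ≤ 1) :
    |τ * (m * (m - 1) - 2 * m ^ 2 * q)| ≤ (m : ℝ) ^ 2 := by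
  have h₁ := natCast_mul_sub_one_nonneg m
  have h₂ : |(m : ℝ) * (m - 1) - 2 * m ^ 2 * q| ≤ 2 * (m : ℝ) ^ 2 :=
    abs_sub_le_of_nonneg_of_le h₁ (by nlinarith) (by positivity) (by nlinarith)
  rw [abs_mul]
  nlinarith [abs_nonneg τ]

theorem abs_normalized_lameSnd_le (m : ℕ) (hτ : |τ| ≤ 1 / 2) (hq₀ : 0 ≤ q) (hq₁ : q ≤ 1) :
    |(1 / 2 * τ ^ 2 - 1 / 8) * (m * (m - 1) * (m - 2)) - 3 * τ ^ 2 * (m ^ 2 * (m - 1)) * q +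
      3 * τ ^ 2 * m ^ 3 * q ^ 2| ≤ 2 * (m : ℝ) ^ 3 := by
  have hτsq : τ ^ 2 ≤ 1 / 4 := by nlinarith [sq_abs τ, abs_nonneg τ]
  have h₁ := natCast_mul_sub_one_nonneg m
  have h₂ := natCast_mul_sub_one_mul_sub_two_nonneg m
  have hm : (0 : ℝ) ≤ m := m.cast_nonneg
  have hA : |(1 / 2 * τ ^ 2 - 1 / 8) * (m * (m - 1) * (m - 2))| ≤ 1 / 8 * (m : ℝ) ^ 3 := by
    rw [abs_mul, abs_of_nonneg h₂]
    have : |1 / 2 * τ ^ 2 - 1 / 8| ≤ 1 / 8 := abs_le.mpr ⟨by nlinarith, by nlinarith⟩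
    gcongr
    nlinarith
  have hB : 3 * τ ^ 2 * (m ^ 2 * (m - 1)) * q ≤ 3 * (1 / 4) * (m : ℝ) ^ 3 * 1 := by
    have : (0 : ℝ) ≤ m ^ 2 * (m - 1) := by nlinarith
    gcongr
    nlinarith
  have hC : 3 * τ ^ 2 * (m : ℝ) ^ 3 * q ^ 2 ≤ 3 * (1 / 4) * (m : ℝ) ^ 3 * 1 := by
    gcongr
    nlinarith
  have hB₀ : 0 ≤ 3 * τ ^ 2 * (m ^ 2 * (m - 1)) * q := by
    have : (0 : ℝ) ≤ m ^ 2 * (m - 1) := by nlinarith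
    positivity
  have hC₀ : 0 ≤ 3 * τ ^ 2 * (m : ℝ) ^ 3 * q ^ 2 := by positivity
  rw [abs_le] at hA ⊢
  constructor <;> linarith [hA.1, hA.2]

end Normalized

theorem abs_rpow_natCast_sub_ofNat {x : ℝ} (hx : x ≠ 0) (m n : ℕ) [n.AtLeastTwo] :
    |x| ^ ((m : ℝ) - OfNat.ofNat n) = |x| ^ m / |x| ^ (OfNat.ofNat n : ℕ) := by
  rw [Real.rpow_sub (abs_pos.mpr hx), Real.rpow_natCast, Real.rpow_ofNat]

section ModelLame

variable {ε κ : ℝ} {m : ℕ} {x y : ℝ}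

theorem modelGap_eventually (hε : 0 < ε) (hκ : 0 ≤ κ) (hx : x ≠ 0) :
    ∀ᶠ s in 𝓝 x, modelGap ε κ m s ≠ 0 ∧ HasDerivAt (modelGap ε κ m) (κ * m * |s| ^ m / s) s := by
  filter_upwards [eventually_ne_nhds hx] with s hs
  exact ⟨by unfold modelGap; positivity, hasDerivAt_modelGap hs⟩

theorem abs_lameFst_modelGap_le (lam mu a : ℝ) (hε : 0 < ε) (hκ : 0 ≤ κ) (hx : x ≠ 0)
    (hy : |y| ≤ (ε + κ * |x| ^ m) / 2) :
    |lameFst lam mu (ubar (modelGap ε κ m)) (corrector a (modelGap ε κ m)) x y| ≤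
      |mu + (lam + mu) * (1 - a)| * m ^ 2 * κ * (|x| ^ ((m : ℝ) - 2) / (ε + κ * |x| ^ m)) := by
  rw [lameFst_ubar_corrector lam mu (modelGap_eventually hε hκ hx)
      (δ₂ := fun s => κ * m * (m - 1) * |s| ^ m / s ^ 2) (hasDerivAt_modelGap₁ hx),
    abs_rpow_natCast_sub_ofNat hx, modelGap]
  set D := ε + κ * |x| ^ m
  have hD : 0 < D := by positivity
  have hτ : |y / D| ≤ 1 / 2 := by
    rw [abs_div, abs_of_pos hD, div_le_iff₀ hD]; linarith
  have hq₀ : 0 ≤ κ * |x| ^ m / D := by positivity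
  have hq₁ : κ * |x| ^ m / D ≤ 1 := (div_le_one hD).mpr (by linarith [hε])
  have hnorm : -(mu + (lam + mu) * (1 - a)) * y *
      (κ * m * (m - 1) * |x| ^ m / x ^ 2 / D ^ 2 - 2 * (κ * m * |x| ^ m / x) ^ 2 / D ^ 3) =
      -(mu + (lam + mu) * (1 - a)) * (κ * (|x| ^ m / |x| ^ 2 / D)) *
        (y / D * (m * (m - 1) - 2 * m ^ 2 * (κ * |x| ^ m / D))) := by
    rw [sq_abs]; field_simp
  rw [hnorm, abs_mul, abs_mul, abs_neg,
    abs_of_nonneg (by positivity : 0 ≤ κ * (|x| ^ m / |x| ^ 2 / D))]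
  have := abs_normalized_lameFst_le m hτ hq₀ hq₁
  calc _ ≤ |mu + (lam + mu) * (1 - a)| * (κ * (|x| ^ m / |x| ^ 2 / D)) * (m : ℝ) ^ 2 := by
        gcongr
    _ = _ := by ring

theorem abs_lameSnd_modelGap_le (lam mu : ℝ) (hlm : lam + 2 * mu ≠ 0) (hε : 0 < ε)
    (hκ : 0 ≤ κ) (hx : x ≠ 0) (hy : |y| ≤ (ε + κ * |x| ^ m) / 2) :
    |lameSnd lam mu (ubar (modelGap ε κ m))
        (corrector ((lam + mu) / (lam + 2 * mu)) (modelGap ε κ m)) x y| ≤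
      2 * |mu * ((lam + mu) / (lam + 2 * mu))| * m ^ 3 * κ * |x| ^ ((m : ℝ) - 3) := by
  have hδ₁ : ∀ᶠ s in 𝓝 x, HasDerivAt (fun s => κ * m * |s| ^ m / s)
      (κ * m * (m - 1) * |s| ^ m / s ^ 2) s := by
    filter_upwards [eventually_ne_nhds hx] with s hs using hasDerivAt_modelGap₁ hs
  rw [lameSnd_ubar_corrector lam mu (modelGap_eventually hε hκ hx) hδ₁ (hasDerivAt_modelGap₂ hx),
    abs_rpow_natCast_sub_ofNat hx, modelGap]
  set D := ε + κ * |x| ^ m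
  set a := (lam + mu) / (lam + 2 * mu)
  have hD : 0 < D := by positivity
  have hτ : |y / D| ≤ 1 / 2 := by
    rw [abs_div, abs_of_pos hD, div_le_iff₀ hD]; linarith
  have hq₀ : 0 ≤ κ * |x| ^ m / D := by positivity
  have hq₁ : κ * |x| ^ m / D ≤ 1 := (div_le_one hD).mpr (by linarith [hε])
  have hcancel : mu * a + (lam + mu) * (a - 1) = 0 := by
    rw [div_sub_one hlm, mul_div_assoc', mul_div_assoc', ← add_div, div_eq_zero_iff]
    exact Or.inl (by ring)
  rw [hcancel, zero_mul, add_zero]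
  have hnorm : (1 / 2 * (y / D) ^ 2 - 1 / 8) * (κ * m * (m - 1) * (m - 2) * |x| ^ m / x ^ 3) -
      3 * y ^ 2 * (κ * m * |x| ^ m / x) * (κ * m * (m - 1) * |x| ^ m / x ^ 2) / D ^ 3 +
      3 * y ^ 2 * (κ * m * |x| ^ m / x) ^ 3 / D ^ 4 =
      κ * |x| ^ m / x ^ 3 * ((1 / 2 * (y / D) ^ 2 - 1 / 8) * (m * (m - 1) * (m - 2)) -
        3 * (y / D) ^ 2 * (m ^ 2 * (m - 1)) * (κ * |x| ^ m / D) +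
        3 * (y / D) ^ 2 * m ^ 3 * (κ * |x| ^ m / D) ^ 2) := by
    field_simp
  have habs : |κ * |x| ^ m / x ^ 3| = κ * |x| ^ m / |x| ^ 3 := by
    rw [abs_div, abs_pow, abs_of_nonneg (by positivity : 0 ≤ κ * |x| ^ m)]
  rw [hnorm, abs_mul (mu * a), abs_mul (κ * |x| ^ m / x ^ 3), habs]
  have := abs_normalized_lameSnd_le m hτ hq₀ hq₁
  calc _ ≤ |mu * a| * (κ * |x| ^ m / |x| ^ 3 * (2 * (m : ℝ) ^ 3)) := by gcongr
    _ = _ := by ring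

end ModelLame

theorem sqrt_sq_add_sq_le (a b : ℝ) : √(a ^ 2 + b ^ 2) ≤ |a| + |b| := by
  simpa [Complex.norm_eq_sqrt_sq_add_sq] using Complex.norm_le_abs_re_add_abs_im ⟨a, b⟩

theorem stmt15_general (lam mu κ R : ℝ) (m : ℕ) (hlm : 0 < lam + 2 * mu)
    (hκ : 0 < κ) :
    ∃ C > 0, ∀ ε : ℝ, 0 < ε → ε < 1 / 2 →
      ∀ x₁ x₂ : ℝ, x₁ ≠ 0 → |x₁| < R →
        -ε / 2 - κ / 2 * |x₁| ^ m < x₂ → x₂ < ε / 2 + κ / 2 * |x₁| ^ m →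
        (let δ : ℝ → ℝ := fun s => ε + κ * |s| ^ m
         let ub : ℝ → ℝ → ℝ := fun s t => (t + ε / 2 + κ / 2 * |s| ^ m) / δ s
         let f : ℝ → ℝ := fun t => (1 / 2) * (t - 1 / 2) ^ 2 - 1 / 8
         let u1 : ℝ → ℝ → ℝ := ub
         let u2 : ℝ → ℝ → ℝ :=
           fun s t => ((lam + mu) / (lam + 2 * mu)) * f (ub s t) * deriv δ s
         let L1 : ℝ := mu * (pd1 (pd1 u1) x₁ x₂ + pd2 (pd2 u1) x₁ x₂) +
           (lam + mu) * pd1 (fun s t => pd1 u1 s t + pd2 u2 s t) x₁ x₂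
         let L2 : ℝ := mu * (pd1 (pd1 u2) x₁ x₂ + pd2 (pd2 u2) x₁ x₂) +
           (lam + mu) * pd2 (fun s t => pd1 u1 s t + pd2 u2 s t) x₁ x₂
         Real.sqrt (L1 ^ 2 + L2 ^ 2) ≤
           C * (|x₁| ^ ((m : ℝ) - 2) / δ x₁ + |x₁| ^ ((m : ℝ) - 3))) := by
  set a := (lam + mu) / (lam + 2 * mu)
  set c₁ := |mu + (lam + mu) * (1 - a)| * m ^ 2 * κ
  set c₂ := 2 * |mu * a| * m ^ 3 * κ
  refine ⟨c₁ + c₂ + 1, by positivity, ?_⟩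
  intro ε hε _ x₁ x₂ hx _ hlow hupp δ ub f u1 u2 L1 L2
  have hub : ub = ubar (modelGap ε κ m) := by
    ext s t; simp only [ub, ubar, δ, modelGap]; ring
  have hL1 : L1 =
      lameFst lam mu (ubar (modelGap ε κ m)) (corrector a (modelGap ε κ m)) x₁ x₂ := by
    simp only [L1, u1, u2, hub]; rfl
  have hL2 : L2 =
      lameSnd lam mu (ubar (modelGap ε κ m)) (corrector a (modelGap ε κ m)) x₁ x₂ := by
    simp only [L2, u1, u2, hub]; rfl
  have hy : |x₂| ≤ (ε + κ * |x₁| ^ m) / 2 := abs_le.mpr ⟨by linarith, by linarith⟩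
  have h₁ := abs_lameFst_modelGap_le lam mu a hε hκ.le hx hy
  have h₂ := abs_lameSnd_modelGap_le lam mu hlm.ne' hε hκ.le hx hy
  have hX : 0 ≤ |x₁| ^ ((m : ℝ) - 2) / δ x₁ := by positivity
  have hY : 0 ≤ |x₁| ^ ((m : ℝ) - 3) := by positivity
  have hc₁ : 0 ≤ c₁ := by positivity
  have hc₂ : 0 ≤ c₂ := by positivity
  rw [hL1, hL2]
  calc _ ≤ _ := sqrt_sq_add_sq_le _ _
    _ ≤ c₁ * (|x₁| ^ ((m : ℝ) - 2) / δ x₁) + c₂ * |x₁| ^ ((m : ℝ) - 3) := add_le_add h₁ h₂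
    _ ≤ _ := by nlinarith [mul_nonneg hc₁ hY, mul_nonneg hc₂ hX]

/-- In the model narrow region with `δ(x₁) = ε + κ|x₁|^m`, the Lamé operator applied to the
improved auxiliary function `u = (ū, ((λ+μ)/(λ+2μ))·f(ū)·δ′)ᵀ` satisfies
`|ℒ_{λ,μ}u| ≤ C(|x₁|^{m−2}/δ(x₁) + |x₁|^{m−3})` with `C` independent of `ε`. -/
theorem stmt15 (lam mu κ R : ℝ) (m : ℕ) (hmu : 0 < mu) (hlm : 0 < lam + 2 * mu)
    (hκ : 0 < κ) (hR : 0 < R) (hR1 : R ≤ 1) (hm : 2 ≤ m) :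
    ∃ C > 0, ∀ ε : ℝ, 0 < ε → ε < 1 / 2 →
      ∀ x₁ x₂ : ℝ, x₁ ≠ 0 → |x₁| < R →
        -ε / 2 - κ / 2 * |x₁| ^ m < x₂ → x₂ < ε / 2 + κ / 2 * |x₁| ^ m →
        (let δ : ℝ → ℝ := fun s => ε + κ * |s| ^ m
         let ub : ℝ → ℝ → ℝ := fun s t => (t + ε / 2 + κ / 2 * |s| ^ m) / δ s
         let f : ℝ → ℝ := fun t => (1 / 2) * (t - 1 / 2) ^ 2 - 1 / 8
         let u1 : ℝ → ℝ → ℝ := ub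
         let u2 : ℝ → ℝ → ℝ :=
           fun s t => ((lam + mu) / (lam + 2 * mu)) * f (ub s t) * deriv δ s
         let L1 : ℝ := mu * (pd1 (pd1 u1) x₁ x₂ + pd2 (pd2 u1) x₁ x₂) +
           (lam + mu) * pd1 (fun s t => pd1 u1 s t + pd2 u2 s t) x₁ x₂
         let L2 : ℝ := mu * (pd1 (pd1 u2) x₁ x₂ + pd2 (pd2 u2) x₁ x₂) +
           (lam + mu) * pd2 (fun s t => pd1 u1 s t + pd2 u2 s t) x₁ x₂
         Real.sqrt (L1 ^ 2 + L2 ^ 2) ≤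
           C * (|x₁| ^ ((m : ℝ) - 2) / δ x₁ + |x₁| ^ ((m : ℝ) - 3))) :=
  stmt15_general lam mu κ R m hlm hκ
end
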